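/- arXiv:math/0506401 — 5 statements merged into one kernel-verified Lean document; each statement's English description precedes it below -/
import Mathlib

section
/- For all matrices A, B, C in SL(2,ℂ), setting a = tr(A), b = tr(B), c = tr(C), d = tr(ABC), x = tr(AB), y = tr(BC), z = tr(CA), the following polynomial identity holds: x² + y² + z² + xyz = (ab+cd)x + (ad+bc)y + (ac+bd)z + (4 − a² − b² − c² − d² − abcd). -/
open Matrix

/-- The fundamental trace identity for triples of matrices in `SL(2,ℂ)`: with
`a = tr A`, `b = tr B`, `c = tr C`, `d = tr(ABC)`, `x = tr(AB)`, `y = tr(BC)`,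
`z = tr(CA)` one has
`x² + y² + z² + xyz = (ab+cd)x + (ad+bc)y + (ac+bd)z + (4 − a² − b² − c² − d² − abcd)`. -/
theorem SL2C_trace_identity (A B C : Matrix.SpecialLinearGroup (Fin 2) ℂ)
    (a b c d x y z : ℂ)
    (ha : a = Matrix.trace (A : Matrix (Fin 2) (Fin 2) ℂ))
    (hb : b = Matrix.trace (B : Matrix (Fin 2) (Fin 2) ℂ))
    (hc : c = Matrix.trace (C : Matrix (Fin 2) (Fin 2) ℂ))
    (hd : d = Matrix.trace ((A * B * C : Matrix.SpecialLinearGroup (Fin 2) ℂ) :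
      Matrix (Fin 2) (Fin 2) ℂ))
    (hx : x = Matrix.trace ((A * B : Matrix.SpecialLinearGroup (Fin 2) ℂ) :
      Matrix (Fin 2) (Fin 2) ℂ))
    (hy : y = Matrix.trace ((B * C : Matrix.SpecialLinearGroup (Fin 2) ℂ) :
      Matrix (Fin 2) (Fin 2) ℂ))
    (hz : z = Matrix.trace ((C * A : Matrix.SpecialLinearGroup (Fin 2) ℂ) :
      Matrix (Fin 2) (Fin 2) ℂ)) :
    x^2 + y^2 + z^2 + x*y*z =
      (a*b + c*d)*x + (a*d + b*c)*y + (a*c + b*d)*z +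
        (4 - a^2 - b^2 - c^2 - d^2 - a*b*c*d) := by
  have hA : Matrix.det (A : Matrix (Fin 2) (Fin 2) ℂ) = 1 := A.2
  have hB : Matrix.det (B : Matrix (Fin 2) (Fin 2) ℂ) = 1 := B.2
  have hC : Matrix.det (C : Matrix (Fin 2) (Fin 2) ℂ) = 1 := C.2
  rw [Matrix.det_fin_two] at hA hB hC
  set A00 := (A : Matrix (Fin 2) (Fin 2) ℂ) 0 0
  set A01 := (A : Matrix (Fin 2) (Fin 2) ℂ) 0 1
  set A10 := (A : Matrix (Fin 2) (Fin 2) ℂ) 1 0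
  set A11 := (A : Matrix (Fin 2) (Fin 2) ℂ) 1 1
  set B00 := (B : Matrix (Fin 2) (Fin 2) ℂ) 0 0
  set B01 := (B : Matrix (Fin 2) (Fin 2) ℂ) 0 1
  set B10 := (B : Matrix (Fin 2) (Fin 2) ℂ) 1 0
  set B11 := (B : Matrix (Fin 2) (Fin 2) ℂ) 1 1
  set C00 := (C : Matrix (Fin 2) (Fin 2) ℂ) 0 0
  set C01 := (C : Matrix (Fin 2) (Fin 2) ℂ) 0 1
  set C10 := (C : Matrix (Fin 2) (Fin 2) ℂ) 1 0
  set C11 := (C : Matrix (Fin 2) (Fin 2) ℂ) 1 1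
  simp only [Matrix.SpecialLinearGroup.coe_mul, Matrix.trace_fin_two, Matrix.mul_apply,
    Fin.sum_univ_two] at ha hb hc hd hx hy hz
  subst ha hb hc hd hx hy hz
  linear_combination ((2:ℂ) + (-1:ℂ)*C11*C11 + (1:ℂ)*B11*B11*C01*C10 + (-1:ℂ)*B10*B11*C01*C11 + (1:ℂ)*B10*B11*C00*C01 + (-1:ℂ)*B10*B10*C01*C01 + (-1:ℂ)*B01*B11*C10*C11 + (1:ℂ)*B01*B11*C00*C10 + (1:ℂ)*B01*B10*C00*C00 + (-1:ℂ)*B01*B01*C10*C10 + (1:ℂ)*B00*B11*C11*C11 + (-2:ℂ)*B00*B11*C00*C11 + (1:ℂ)*B00*B10*C01*C11 + (-1:ℂ)*B00*B10*C00*C01 + (1:ℂ)*B00*B01*C10*C11 + (-1:ℂ)*B00*B01*C00*C10 + (-1:ℂ)*B00*B00 + (1:ℂ)*B00*B00*C00*C11) * hA + ((-2:ℂ)*C01*C10 + (-1:ℂ)*C00*C00 + (1:ℂ)*A11*A11*C01*C10 + (-1:ℂ)*A10*A11*C01*C11 + (1:ℂ)*A10*A11*C00*C01 + (-1:ℂ)*A10*A10*C01*C01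 + (-1:ℂ)*A01*A11*C10*C11 + (1:ℂ)*A01*A11*C00*C10 + (1:ℂ)*A01*A10*C11*C11 + (-2:ℂ)*A01*A10*C00*C11 + (-1:ℂ)*A01*A01*C10*C10 + (1:ℂ)*A00*A11*C00*C00 + (1:ℂ)*A00*A10*C01*C11 + (-1:ℂ)*A00*A10*C00*C01 + (1:ℂ)*A00*A01*C10*C11 + (-1:ℂ)*A00*A01*C00*C10 + (-1:ℂ)*A00*A00 + (1:ℂ)*A00*A00*C00*C11) * hB + ((2:ℂ) + (-1:ℂ)*B11*B11 + (-2:ℂ)*B00*B11 + (-1:ℂ)*A11*A11 + (1:ℂ)*A11*A11*B00*B11 + (-1:ℂ)*A10*A11*B01*B11 + (1:ℂ)*A10*A11*B00*B01 + (-1:ℂ)*A10*A10*B01*B01 + (-1:ℂ)*A01*A11*B10*B11 + (1:ℂ)*A01*A11*B00*B10 + (-2:ℂ)*A01*A10 + (-2:ℂ)*A01*A10*B01*B10 + (1:ℂ)*A01*A10*B00*B00 + (-1:ℂ)*A01*A01*B10*B10 + (1:ℂ)*A00*A11*B11*B11 + (1:ℂ)*A00*A10*B01*B11 + (-1:ℂ)*A00*A10*B00*B01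 + (1:ℂ)*A00*A01*B10*B11 + (-1:ℂ)*A00*A01*B00*B10 + (1:ℂ)*A00*A00*B01*B10) * hC
end

section
/- Let (a,b,c,d) ∈ [−2,2]⁴. There exist matrices A, B, C ∈ SU(2) with tr(A) = a, tr(B) = b, tr(C) = c, and tr(ABC) = d if and only if there exists a real number y such that a² + d² + y² + ady ≤ 4 and b² + c² + y² + bcy ≤ 4. -/
open Matrix

/-- The special unitary group `SU(2)` of 2×2 complex matrices. -/
abbrev SU2 := Matrix.specialUnitaryGroup (Fin 2) ℂ

open Complex in
/-- A generic element of `SU(2)` with real off-diagonal part. -/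
noncomputable def SU2gen (p₁ p₂ q : ℝ) : Matrix (Fin 2) (Fin 2) ℂ :=
  !![(p₁:ℂ) + p₂ * I, (q:ℂ); -(q:ℂ), (p₁:ℂ) - p₂ * I]

lemma SU2gen_mem (p₁ p₂ q : ℝ) (h : p₁^2 + p₂^2 + q^2 = 1) :
    SU2gen p₁ p₂ q ∈ Matrix.specialUnitaryGroup (Fin 2) ℂ := by
  rw [Matrix.mem_specialUnitaryGroup_iff]
  constructor
  · rw [Matrix.mem_unitaryGroup_iff]
    ext i j
    fin_cases i <;> fin_cases j <;>
      simp [SU2gen, Matrix.mul_apply, Fin.sum_univ_two, Matrix.conjTranspose_apply,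
        Complex.ext_iff] <;> constructor <;> nlinarith [h]
  · simp [SU2gen, Matrix.det_fin_two, Complex.ext_iff]
    constructor <;> nlinarith [h]

lemma trace_SU2gen (p₁ p₂ q : ℝ) : Matrix.trace (SU2gen p₁ p₂ q) = ((2*p₁ : ℝ) : ℂ) := by
  simp [SU2gen, Matrix.trace_fin_two]; ring

lemma trace_SU2gen_mul (p₁ p₂ q m₁ m₂ : ℝ) :
    Matrix.trace (SU2gen p₁ p₂ q * SU2gen m₁ m₂ 0) = ((2*(p₁*m₁ - p₂*m₂) : ℝ) : ℂ) := by
  simp [SU2gen, Matrix.trace_fin_two, Matrix.mul_apply, Fin.sum_univ_two]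
  push_cast
  ring_nf
  rw [Complex.I_sq]
  ring

lemma SU2gen_inv_mul (p₁ p₂ q : ℝ) (h : p₁^2 + p₂^2 + q^2 = 1) :
    SU2gen p₁ (-p₂) (-q) * SU2gen p₁ p₂ q = 1 := by
  ext i j
  fin_cases i <;> fin_cases j <;>
    simp [SU2gen, Matrix.mul_apply, Fin.sum_univ_two, Matrix.one_apply, Complex.ext_iff] <;>
    constructor <;> nlinarith [h]

lemma SU2_entries (A : Matrix (Fin 2) (Fin 2) ℂ)
    (hA : A ∈ Matrix.specialUnitaryGroup (Fin 2) ℂ) :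
    A 1 1 = starRingEnd ℂ (A 0 0) ∧ A 1 0 = -starRingEnd ℂ (A 0 1) ∧
    (A 0 0).re^2 + (A 0 0).im^2 + (A 0 1).re^2 + (A 0 1).im^2 = 1 := by
  rw [Matrix.mem_specialUnitaryGroup_iff] at hA
  obtain ⟨hu, hdet⟩ := hA
  have hu2 := hu
  rw [Matrix.mem_unitaryGroup_iff] at hu
  rw [Matrix.mem_unitaryGroup_iff'] at hu2
  have hadj : A * A.adjugate = 1 := by
    rw [Matrix.mul_adjugate, hdet, one_smul]
  have hstar : star A = A.adjugate := by
    calc star A = star A * (A * A.adjugate) := by rw [hadj, mul_one]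
    _ = (star A * A) * A.adjugate := by rw [mul_assoc]
    _ = A.adjugate := by rw [hu2, one_mul]
  rw [Matrix.adjugate_fin_two] at hstar
  have h00 : star A 0 0 = A 1 1 := by rw [hstar]; simp
  have h01 : star A 0 1 = -A 0 1 := by rw [hstar]; simp
  rw [Matrix.star_apply] at h00 h01
  have hnorm : (A * star A) 0 0 = 1 := by rw [hu]; simp
  rw [Matrix.mul_apply, Fin.sum_univ_two, Matrix.star_apply, Matrix.star_apply] at hnorm
  refine ⟨h00.symm, ?_, ?_⟩
  · have := congrArg (starRingEnd ℂ) h01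
    simpa using this
  · have := congrArg Complex.re hnorm
    simp [Complex.mul_re, Complex.conj_re, Complex.conj_im] at this
    nlinarith [this]

/-- Trace of an `SU(2)` matrix is real. -/
lemma SU2_trace_real (A : Matrix (Fin 2) (Fin 2) ℂ)
    (hA : A ∈ Matrix.specialUnitaryGroup (Fin 2) ℂ) :
    ∃ t : ℝ, Matrix.trace A = (t : ℂ) := by
  obtain ⟨h1, -, -⟩ := SU2_entries A hA
  refine ⟨2 * (A 0 0).re, ?_⟩
  rw [Matrix.trace_fin_two, h1, Complex.add_conj]

/-- The fundamental trace inequality for pairs in `SU(2)`. -/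
lemma SU2_trace_ineq (X Y : Matrix (Fin 2) (Fin 2) ℂ)
    (hX : X ∈ Matrix.specialUnitaryGroup (Fin 2) ℂ)
    (hY : Y ∈ Matrix.specialUnitaryGroup (Fin 2) ℂ) {x y z : ℝ}
    (hx : Matrix.trace X = (x:ℂ)) (hy : Matrix.trace Y = (y:ℂ))
    (hz : Matrix.trace (X * Y) = (z:ℂ)) :
    x^2 + y^2 + z^2 - x*y*z ≤ 4 := by
  obtain ⟨hX1, hX2, hX3⟩ := SU2_entries X hX
  obtain ⟨hY1, hY2, hY3⟩ := SU2_entries Y hY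
  rw [Matrix.trace_fin_two, hX1] at hx
  rw [Matrix.trace_fin_two, hY1] at hy
  rw [Matrix.trace_fin_two, Matrix.mul_apply, Matrix.mul_apply, Fin.sum_univ_two,
    Fin.sum_univ_two, hX1, hX2, hY1, hY2] at hz
  have hx' := congrArg Complex.re hx
  have hy' := congrArg Complex.re hy
  have hz' := congrArg Complex.re hz
  simp [Complex.add_re, Complex.mul_re, Complex.conj_re, Complex.conj_im] at hx' hy' hz'
  set p₁ := (X 0 0).re; set p₂ := (X 0 0).im
  set q₁ := (X 0 1).re; set q₂ := (X 0 1).im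
  set r₁ := (Y 0 0).re; set r₂ := (Y 0 0).im
  set s₁ := (Y 0 1).re; set s₂ := (Y 0 1).im
  obtain rfl : x = 2*p₁ := by linarith
  obtain rfl : y = 2*r₁ := by linarith
  obtain rfl : z = 2*p₁*r₁ - 2*(p₂*r₂ + q₁*s₁ + q₂*s₂) := by linarith
  have hA : p₂^2 + q₁^2 + q₂^2 = 1 - p₁^2 := by linarith
  have hB : r₂^2 + s₁^2 + s₂^2 = 1 - r₁^2 := by linarith
  have key : (p₂*r₂ + q₁*s₁ + q₂*s₂)^2 ≤ (p₂^2 + q₁^2 + q₂^2)*(r₂^2 + s₁^2 + s₂^2) := by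
    nlinarith [sq_nonneg (p₂*s₁ - q₁*r₂), sq_nonneg (p₂*s₂ - q₂*r₂), sq_nonneg (q₁*s₂ - q₂*s₁)]
  rw [hA, hB] at key
  nlinarith [key]

/-- Realization of a prescribed pair of traces against a fixed diagonal element. -/
lemma SU2_key_exists (u v z : ℝ) (hu : u^2 ≤ 4) (hv : v^2 ≤ 4)
    (h : (u*v - 2*z)^2 ≤ (4 - u^2)*(4 - v^2)) :
    ∃ p₂ q : ℝ, (u/2)^2 + p₂^2 + q^2 = 1 ∧
      2*((u/2)*(v/2) - p₂*(Real.sqrt (4 - v^2)/2)) = z := by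
  have h4v : (0:ℝ) ≤ 4 - v^2 := by linarith
  have hs : Real.sqrt (4 - v^2)^2 = 4 - v^2 := Real.sq_sqrt h4v
  by_cases hz : Real.sqrt (4 - v^2) = 0
  · have hv4 : v^2 = 4 := by
      have := hs; rw [hz] at this; nlinarith [this]
    have huz : u*v = 2*z := by nlinarith [h, sq_nonneg (u*v - 2*z)]
    refine ⟨0, Real.sqrt (1 - (u/2)^2), ?_, ?_⟩
    · rw [Real.sq_sqrt (by nlinarith)]; ring
    · rw [hz]; nlinarith [huz]
  · have hspos : 0 < Real.sqrt (4 - v^2) := lt_of_le_of_ne (Real.sqrt_nonneg _) (Ne.symm hz)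
    set s := Real.sqrt (4 - v^2) with hsdef
    refine ⟨(u*v - 2*z)/(2*s), Real.sqrt (1 - (u/2)^2 - ((u*v - 2*z)/(2*s))^2), ?_, ?_⟩
    · rw [Real.sq_sqrt ?_]
      · ring
      · have hle : ((u*v - 2*z)/(2*s))^2 ≤ 1 - (u/2)^2 := by
          rw [div_pow, div_le_iff₀ (by positivity)]
          have h2s : (2*s)^2 = 4*(4 - v^2) := by rw [mul_pow, hs]; ring
          rw [h2s]
          nlinarith [h]
        nlinarith [hle]
    · field_simp
      ring

set_option maxHeartbeats 1600000 in
/-- For `(a,b,c,d) ∈ [−2,2]⁴` there exist `A, B, C ∈ SU(2)` with `tr A = a`, `tr B = b`,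
`tr C = c`, `tr(ABC) = d` if and only if there is `y ∈ ℝ` with
`a² + d² + y² + ady ≤ 4` and `b² + c² + y² + bcy ≤ 4`. -/
theorem boundary_traces_SU2_iff_exists_y (a b c d : ℝ)
    (ha : a ∈ Set.Icc (-2:ℝ) 2) (hb : b ∈ Set.Icc (-2:ℝ) 2)
    (hc : c ∈ Set.Icc (-2:ℝ) 2) (hd : d ∈ Set.Icc (-2:ℝ) 2) :
    (∃ A B C : SU2,
      Matrix.trace ((A : SU2) : Matrix (Fin 2) (Fin 2) ℂ) = (a : ℂ) ∧
      Matrix.trace ((B : SU2) : Matrix (Fin 2) (Fin 2) ℂ) = (b : ℂ) ∧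
      Matrix.trace ((C : SU2) : Matrix (Fin 2) (Fin 2) ℂ) = (c : ℂ) ∧
      Matrix.trace ((A * B * C : SU2) : Matrix (Fin 2) (Fin 2) ℂ) = (d : ℂ)) ↔
    ∃ y : ℝ, a^2 + d^2 + y^2 + a*d*y ≤ 4 ∧ b^2 + c^2 + y^2 + b*c*y ≤ 4 := by
  obtain ⟨ha1, ha2⟩ := ha
  obtain ⟨hb1, hb2⟩ := hb
  obtain ⟨hc1, hc2⟩ := hc
  obtain ⟨hd1, hd2⟩ := hd
  constructor
  · rintro ⟨A, B, C, hA, hB, hC, hABC⟩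
    have hBCmem : ((B : Matrix (Fin 2) (Fin 2) ℂ) * (C : Matrix (Fin 2) (Fin 2) ℂ)) ∈
        Matrix.specialUnitaryGroup (Fin 2) ℂ := mul_mem B.2 C.2
    obtain ⟨t, ht⟩ := SU2_trace_real _ hBCmem
    have hABC' : Matrix.trace ((A : Matrix (Fin 2) (Fin 2) ℂ) *
        ((B : Matrix (Fin 2) (Fin 2) ℂ) * (C : Matrix (Fin 2) (Fin 2) ℂ))) = (d : ℂ) := by
      rw [← mul_assoc]
      rw [show (A : Matrix (Fin 2) (Fin 2) ℂ) * (B : Matrix (Fin 2) (Fin 2) ℂ) *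
        (C : Matrix (Fin 2) (Fin 2) ℂ) = ((A * B * C : SU2) : Matrix (Fin 2) (Fin 2) ℂ) by simp]
      exact hABC
    have h1 := SU2_trace_ineq _ _ A.2 hBCmem hA ht hABC'
    have h2 := SU2_trace_ineq _ _ B.2 C.2 hB hC ht
    exact ⟨-t, by nlinarith [h1], by nlinarith [h2]⟩
  · rintro ⟨y, h1, h2⟩
    obtain ⟨v, hv⟩ : ∃ v : ℝ, v = -y := ⟨-y, rfl⟩
    have h1' : a^2 + d^2 + v^2 - a*d*v ≤ 4 := by rw [hv]; nlinarith [h1]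
    have h2' : b^2 + c^2 + v^2 - b*c*v ≤ 4 := by rw [hv]; nlinarith [h2]
    have ha4 : a^2 ≤ 4 := by nlinarith
    have hb4 : b^2 ≤ 4 := by nlinarith
    have hc4 : c^2 ≤ 4 := by nlinarith
    have hd4 : d^2 ≤ 4 := by nlinarith
    have hv4 : v^2 ≤ 4 := by
      by_cases hcc : c^2 < 4
      · nlinarith [sq_nonneg (2*b - c*v), h2']
      · have hcc' : c^2 = 4 := le_antisymm hc4 (not_lt.mp hcc)
        have hfac : (c - 2)*(c + 2) = 0 := by linear_combination hcc'
        rcases mul_eq_zero.mp hfac with hc2 | hc2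
        · have hc2' : c = 2 := by linarith
          have h3 : (b - v)^2 ≤ 0 := by nlinarith [h2', hc2']
          have h4 : b - v = 0 :=
            pow_eq_zero_iff two_ne_zero |>.mp (le_antisymm h3 (sq_nonneg _))
          nlinarith [hb4, h4]
        · have hc2' : c = -2 := by linarith
          have h3 : (b + v)^2 ≤ 0 := by nlinarith [h2', hc2']
          have h4 : b + v = 0 :=
            pow_eq_zero_iff two_ne_zero |>.mp (le_antisymm h3 (sq_nonneg _))
          nlinarith [hb4, h4]
    have hsq : Real.sqrt (4 - v^2)^2 = 4 - v^2 := Real.sq_sqrt (by linarith)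
    have hMnorm : (v/2)^2 + (Real.sqrt (4 - v^2)/2)^2 + (0:ℝ)^2 = 1 := by
      nlinarith [hsq]
    obtain ⟨pA, qA, hAnorm, hAtr⟩ := SU2_key_exists a v d ha4 hv4 (by nlinarith [h1'])
    obtain ⟨pX, qX, hXnorm, hXtr⟩ := SU2_key_exists b v c hb4 hv4 (by nlinarith [h2'])
    refine ⟨⟨SU2gen (a/2) pA qA, SU2gen_mem _ _ _ hAnorm⟩,
      ⟨SU2gen (b/2) (-pX) (-qX), SU2gen_mem _ _ _ (by linear_combination hXnorm)⟩,
      ⟨SU2gen (b/2) pX qX * SU2gen (v/2) (Real.sqrt (4 - v^2)/2) 0,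
        mul_mem (SU2gen_mem _ _ _ hXnorm) (SU2gen_mem _ _ _ hMnorm)⟩, ?_, ?_, ?_, ?_⟩
    · show Matrix.trace (SU2gen (a/2) pA qA) = (a : ℂ)
      rw [trace_SU2gen]; push_cast; ring
    · show Matrix.trace (SU2gen (b/2) (-pX) (-qX)) = (b : ℂ)
      rw [trace_SU2gen]; push_cast; ring
    · show Matrix.trace (SU2gen (b/2) pX qX * SU2gen (v/2) (Real.sqrt (4 - v^2)/2) 0) = (c : ℂ)
      rw [trace_SU2gen_mul]
      exact_mod_cast congrArg (fun t : ℝ => (t : ℂ)) hXtr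
    · show Matrix.trace (SU2gen (a/2) pA qA * SU2gen (b/2) (-pX) (-qX) *
        (SU2gen (b/2) pX qX * SU2gen (v/2) (Real.sqrt (4 - v^2)/2) 0)) = (d : ℂ)
      rw [mul_assoc (SU2gen (a/2) pA qA), ← mul_assoc (SU2gen (b/2) (-pX) (-qX)),
        SU2gen_inv_mul _ _ _ hXnorm, one_mul, trace_SU2gen_mul]
      exact_mod_cast congrArg (fun t : ℝ => (t : ℂ)) hAtr
end

section
/- Let A, B, C ∈ SL(2,ℂ) and set A' = A, B' = BA, C' = A⁻¹C. Then: tr(A') = tr(A); tr(B') = tr(AB); tr(C') = tr(A)·tr(C) − tr(CA); tr(A'B'C') = tr(ABC); tr(A'B') = tr(A)·tr(AB) − tr(B); tr(B'C') = tr(BC); and tr(C'A') = tr(C). -/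
open Matrix

/-- Trace computations for the substitution `A' = A`, `B' = BA`, `C' = A⁻¹C` in
`SL(2,ℂ)`: in the coordinates `(a,b,c,d,x,y,z) = (tr A, tr B, tr C, tr ABC, tr AB,
tr BC, tr CA)` this is the map `(a,b,c,d,x,y,z) ↦ (a, x, ac−z, d, ax−b, y, c)`. -/
theorem trace_action_of_alpha (A B C : Matrix.SpecialLinearGroup (Fin 2) ℂ) :
    Matrix.trace ((A : Matrix.SpecialLinearGroup (Fin 2) ℂ) : Matrix (Fin 2) (Fin 2) ℂ) =
      Matrix.trace (A : Matrix (Fin 2) (Fin 2) ℂ) ∧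
    Matrix.trace ((B * A : Matrix.SpecialLinearGroup (Fin 2) ℂ) : Matrix (Fin 2) (Fin 2) ℂ) =
      Matrix.trace ((A * B : Matrix.SpecialLinearGroup (Fin 2) ℂ) : Matrix (Fin 2) (Fin 2) ℂ) ∧
    Matrix.trace ((A⁻¹ * C : Matrix.SpecialLinearGroup (Fin 2) ℂ) : Matrix (Fin 2) (Fin 2) ℂ) =
      Matrix.trace (A : Matrix (Fin 2) (Fin 2) ℂ) *
        Matrix.trace (C : Matrix (Fin 2) (Fin 2) ℂ) -
      Matrix.trace ((C * A : Matrix.SpecialLinearGroup (Fin 2) ℂ) : Matrix (Fin 2) (Fin 2) ℂ) ∧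
    Matrix.trace ((A * (B * A) * (A⁻¹ * C) : Matrix.SpecialLinearGroup (Fin 2) ℂ) :
        Matrix (Fin 2) (Fin 2) ℂ) =
      Matrix.trace ((A * B * C : Matrix.SpecialLinearGroup (Fin 2) ℂ) :
        Matrix (Fin 2) (Fin 2) ℂ) ∧
    Matrix.trace ((A * (B * A) : Matrix.SpecialLinearGroup (Fin 2) ℂ) :
        Matrix (Fin 2) (Fin 2) ℂ) =
      Matrix.trace (A : Matrix (Fin 2) (Fin 2) ℂ) *
        Matrix.trace ((A * B : Matrix.SpecialLinearGroup (Fin 2) ℂ) :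
          Matrix (Fin 2) (Fin 2) ℂ) -
      Matrix.trace (B : Matrix (Fin 2) (Fin 2) ℂ) ∧
    Matrix.trace (((B * A) * (A⁻¹ * C) : Matrix.SpecialLinearGroup (Fin 2) ℂ) :
        Matrix (Fin 2) (Fin 2) ℂ) =
      Matrix.trace ((B * C : Matrix.SpecialLinearGroup (Fin 2) ℂ) :
        Matrix (Fin 2) (Fin 2) ℂ) ∧
    Matrix.trace (((A⁻¹ * C) * A : Matrix.SpecialLinearGroup (Fin 2) ℂ) :
        Matrix (Fin 2) (Fin 2) ℂ) =
      Matrix.trace (C : Matrix (Fin 2) (Fin 2) ℂ) := by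
  have hA : (A : Matrix (Fin 2) (Fin 2) ℂ) 0 0 * A 1 1 - A 0 1 * A 1 0 = 1 := by
    have := A.property
    rwa [Matrix.det_fin_two] at this
  have h4 : A * (B * A) * (A⁻¹ * C) = A * B * C := by group
  have h6 : (B * A) * (A⁻¹ * C) = B * C := by group
  refine ⟨rfl, ?_, ?_, by rw [h4], ?_, by rw [h6], ?_⟩
  · rw [Matrix.SpecialLinearGroup.coe_mul, Matrix.SpecialLinearGroup.coe_mul,
      Matrix.trace_mul_comm]
  · simp only [Matrix.SpecialLinearGroup.coe_mul, Matrix.SpecialLinearGroup.coe_inv,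
      Matrix.adjugate_fin_two, Matrix.trace_fin_two, Matrix.mul_apply, Fin.sum_univ_two,
      Matrix.of_apply, Matrix.cons_val', Matrix.cons_val_zero, Matrix.cons_val_one,
      Matrix.head_cons, Matrix.head_fin_const, Matrix.empty_val', Matrix.cons_val_fin_one]
    ring
  · simp only [Matrix.SpecialLinearGroup.coe_mul, Matrix.trace_fin_two, Matrix.mul_apply,
      Fin.sum_univ_two]
    linear_combination (-(B 0 0 : ℂ) - B 1 1) * hA
  · rw [Matrix.SpecialLinearGroup.coe_mul, Matrix.trace_mul_comm,
      ← Matrix.SpecialLinearGroup.coe_mul, show A * (A⁻¹ * C) = C by group]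
end

section
/- Let a, d ∈ (−2,2). The set V₃(a,d) = {(b,c) ∈ [−2,2]² : there exists y ∈ ℝ with a² + d² + y² + ady ≤ 4 and b² + c² + y² + bcy ≤ 4} is a connected subset of ℝ². -/
/-- For `a, d ∈ (−2,2)`, the fiber
`V₃(a,d) = {(b,c) ∈ [−2,2]² : ∃ y, a² + d² + y² + ady ≤ 4 and b² + c² + y² + bcy ≤ 4}`
is a connected subset of `ℝ²`. -/
theorem fiber_V3_connected (a d : ℝ)
    (ha : a ∈ Set.Ioo (-2:ℝ) 2) (hd : d ∈ Set.Ioo (-2:ℝ) 2) :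
    IsConnected {p : ℝ × ℝ | p.1 ∈ Set.Icc (-2:ℝ) 2 ∧ p.2 ∈ Set.Icc (-2:ℝ) 2 ∧
      ∃ y : ℝ, a^2 + d^2 + y^2 + a*d*y ≤ 4 ∧ p.1^2 + p.2^2 + y^2 + p.1*p.2*y ≤ 4} := by
  set S : Set (ℝ × ℝ) := {p : ℝ × ℝ | p.1 ∈ Set.Icc (-2:ℝ) 2 ∧ p.2 ∈ Set.Icc (-2:ℝ) 2 ∧
      ∃ y : ℝ, a^2 + d^2 + y^2 + a*d*y ≤ 4 ∧ p.1^2 + p.2^2 + y^2 + p.1*p.2*y ≤ 4} with hS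
  obtain ⟨ha1, ha2⟩ := ha
  obtain ⟨hd1, hd2⟩ := hd
  have h0 : ((0,0) : ℝ × ℝ) ∈ S := by
    have key : (0:ℝ) < (4 - a^2) * (4 - d^2) :=
      mul_pos (by nlinarith) (by nlinarith)
    refine ⟨⟨by norm_num, by norm_num⟩, ⟨by norm_num, by norm_num⟩, -(a*d)/2, by nlinarith, ?_⟩
    show (0:ℝ)^2 + 0^2 + (-(a*d)/2)^2 + 0*0*(-(a*d)/2) ≤ 4
    have haa : a^2 ≤ 4 := by nlinarith
    have hdd : d^2 ≤ 4 := by nlinarith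
    have := mul_le_mul haa hdd (sq_nonneg d) (by norm_num : (0:ℝ) ≤ 4)
    nlinarith
  -- star-shapedness: segment from 0 to any point of S stays in S
  have hstar : ∀ p ∈ S, segment ℝ ((0,0) : ℝ × ℝ) p ⊆ S := by
    rintro ⟨b, c⟩ ⟨⟨hb1, hb2⟩, ⟨hc1, hc2⟩, y, hy1, hy2⟩ q hq
    simp only [] at hb1 hb2 hc1 hc2 hy2
    rw [segment_eq_image] at hq
    obtain ⟨t, ⟨ht0, ht1⟩, rfl⟩ := hq
    have hy4 : y^2 ≤ 4 := by
      nlinarith [sq_nonneg (a*y/2 + d), sq_nonneg (a*y/2 - d),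
        mul_pos (by linarith : (0:ℝ) < 2-a) (by linarith : (0:ℝ) < 2+a)]
    have hbc : 0 ≤ b^2 + c^2 + b*c*y := by
      nlinarith [sq_nonneg (b+c), sq_nonneg (b-c), sq_nonneg (b*y/2 + c), sq_nonneg (b*y/2 - c)]
    simp only [Prod.smul_mk, smul_eq_mul, Prod.mk_add_mk, hS, Set.mem_setOf_eq,
      Set.mem_Icc]
    constructor
    · constructor <;> nlinarith
    constructor
    · constructor <;> nlinarith
    have ht2 : (0:ℝ) ≤ 1 - t^2 := by nlinarith
    refine ⟨y, hy1, ?_⟩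
    nlinarith [mul_nonneg ht2 hbc]
  refine ⟨⟨(0,0), h0⟩, ?_⟩
  have hU : S = ⋃₀ ((fun p => segment ℝ ((0,0):ℝ×ℝ) p) '' S) := by
    apply Set.Subset.antisymm
    · intro p hp
      exact ⟨segment ℝ ((0,0):ℝ×ℝ) p, ⟨p, hp, rfl⟩, right_mem_segment ℝ _ _⟩
    · rintro q ⟨_, ⟨p, hp, rfl⟩, hq⟩
      exact hstar p hp hq
  rw [hU]
  exact isPreconnected_sUnion ((0,0):ℝ×ℝ) _
    (by rintro _ ⟨p, hp, rfl⟩; exact left_mem_segment ℝ _ _)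
    (by rintro _ ⟨p, hp, rfl⟩; exact (convex_segment _ _).isPreconnected)
end

section
/- Let n ≥ 4. Assume that every measurable function on SU(2)^{n−1} invariant under the action of all automorphisms of the free group F_{n−1} is almost everywhere constant. Let f : SU(2)ⁿ → ℝ be measurable, invariant under simultaneous conjugation by SU(2), and invariant under the transformations (g₁,…,g_{n−1},gₙ) ↦ (σ_φ(g₁,…,g_{n−1}), gₙ) for every automorphism φ of F_{n−1}, where σ_φ denotes the action of φ on SU(2)^{n−1}. Then there exists a measurable function H : ℝ → ℝ such that f(g₁,…,gₙ) = H(tr(gₙ)) for almost every (g₁,…,gₙ) ∈ SU(2)ⁿ with respect to product Haar measure. -/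
open MeasureTheory Matrix

noncomputable section

instance : Group SU2 :=
  { (inferInstance : Monoid SU2) with
    inv := fun A => ⟨star A.1, by
      rcases Matrix.mem_specialUnitaryGroup_iff.mp A.2 with ⟨h1, h2⟩
      refine Matrix.mem_specialUnitaryGroup_iff.mpr ⟨Unitary.star_mem h1, ?_⟩
      rw [Matrix.star_eq_conjTranspose, Matrix.det_conjTranspose, h2, star_one]⟩
    inv_mul_cancel := fun A => Subtype.ext (Matrix.mem_specialUnitaryGroup_iff.mp A.2).1.1 }

instance : MeasurableSpace SU2 := borel SU2
instance : BorelSpace SU2 := ⟨rfl⟩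

/-- The action of an automorphism `φ` of the free group `F_n` on
`SU(2)^n ≅ Hom(F_n, SU(2))`, sending `g` to `(ρ_g(φ⁻¹ X_1), …, ρ_g(φ⁻¹ X_n))`,
where `ρ_g` is the homomorphism with `ρ_g(X_i) = g_i`. -/
def FreeGroup.act {n : ℕ} (φ : MulAut (FreeGroup (Fin n))) (g : Fin n → SU2) :
    Fin n → SU2 :=
  fun i => FreeGroup.lift g (φ⁻¹ (FreeGroup.of i))


/-!
For a fixed last coordinate `x`, the slice `g ↦ f (g, x)` is `Aut(F_m)`-invariant, hence a.e.
equal to its mean `c x`, and Fubini gives `f g = c (g last)` a.e. Haar measure is invariant under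
conjugation, so `c` is a class function. Finally every `A ∈ SU(2)` is conjugate in `SU(2)` to
`diag(λ, λ̄)` with `λ + λ̄ = tr A`: conjugate by the element of `SU(2)` whose first column is a
unit eigenvector for `λ`. Hence `c x = c (diag (tr x))`.
-/

open scoped ComplexConjugate

lemma Complex.normSq_add_normSq_eq_one_iff (a b : ℂ) :
    normSq a + normSq b = 1 ↔ conj a * a + conj b * b = 1 := by
  rw [← normSq_eq_conj_mul_self, ← normSq_eq_conj_mul_self]
  exact_mod_cast Iff.rfl

lemma exists_unit_eigenvector_of_det_eq_zero {M : Matrix (Fin 2) (Fin 2) ℂ} {l : ℂ}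
    (h : (M - l • 1).det = 0) :
    ∃ a b : ℂ, Complex.normSq a + Complex.normSq b = 1 ∧ M *ᵥ ![a, b] = l • ![a, b] := by
  obtain ⟨v, hv0, hv⟩ := exists_mulVec_eq_zero_iff.mpr h
  rw [sub_mulVec, smul_mulVec, one_mulVec, sub_eq_zero] at hv
  have hr : 0 < Complex.normSq (v 0) + Complex.normSq (v 1) := by
    obtain ⟨i, hi⟩ := Function.ne_iff.mp hv0
    fin_cases i <;> simp only [Fin.zero_eta, Fin.mk_one, Pi.zero_apply] at hi
    · linarith [Complex.normSq_pos.mpr hi, Complex.normSq_nonneg (v 1)]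
    · linarith [Complex.normSq_pos.mpr hi, Complex.normSq_nonneg (v 0)]
  set s : ℂ := (((√(Complex.normSq (v 0) + Complex.normSq (v 1)))⁻¹ : ℝ) : ℂ)
  have hsv : ![s * v 0, s * v 1] = s • v := by
    ext i; fin_cases i <;> rfl
  refine ⟨s * v 0, s * v 1, ?_, ?_⟩
  · simp only [s, Complex.normSq_mul, Complex.normSq_ofReal, ← mul_add]
    rw [← sq, inv_pow, Real.sq_sqrt hr.le, inv_mul_cancel₀ hr.ne']
  · rw [hsv, mulVec_smul, hv, smul_comm]

namespace SU2

lemma coe_inv (A : SU2) :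
    ((A⁻¹ : SU2) : Matrix (Fin 2) (Fin 2) ℂ) = star (A : Matrix (Fin 2) (Fin 2) ℂ) :=
  rfl

lemma det_coe (A : SU2) : (A : Matrix (Fin 2) (Fin 2) ℂ).det = 1 :=
  (mem_specialUnitaryGroup_iff.mp A.2).2

lemma coe_eq (A : SU2) :
    (A : Matrix (Fin 2) (Fin 2) ℂ) = !![A.1 0 0, -conj (A.1 1 0); A.1 1 0, conj (A.1 0 0)] := by
  have hadj : star A.1 = adjugate A.1 := by
    rw [← one_mul (adjugate A.1), ← A.2.1.1, mul_assoc, mul_adjugate, det_coe, one_smul, mul_one]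
  have h00 := congrFun₂ hadj 0 0
  have h10 := congrFun₂ hadj 1 0
  simp only [adjugate_fin_two, star_apply, of_apply, RCLike.star_def, cons_val', cons_val_zero,
    cons_val_one, cons_val_fin_one] at h00 h10
  have h01 : A.1 0 1 = -conj (A.1 1 0) := by simpa using congrArg conj h10
  ext i j
  fin_cases i <;> fin_cases j <;> simp [h00, h01]

lemma ext_col {A B : SU2} (h0 : A.1 0 0 = B.1 0 0) (h1 : A.1 1 0 = B.1 1 0) : A = B :=
  Subtype.ext <| by rw [coe_eq A, coe_eq B, h0, h1]

lemma normSq_add_normSq (A : SU2) : Complex.normSq (A.1 0 0) + Complex.normSq (A.1 1 0) = 1 := by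
  have h := det_coe A
  rw [coe_eq A, det_fin_two_of] at h
  rw [Complex.normSq_add_normSq_eq_one_iff]
  linear_combination h

lemma trace_eq (A : SU2) :
    trace (A : Matrix (Fin 2) (Fin 2) ℂ) = ((2 * (A.1 0 0).re : ℝ) : ℂ) := by
  conv_lhs => rw [coe_eq A]
  rw [trace_fin_two_of, Complex.add_conj]

lemma abs_re_trace_le_two (A : SU2) : |(trace (A : Matrix (Fin 2) (Fin 2) ℂ)).re| ≤ 2 := by
  rw [trace_eq, Complex.ofReal_re, abs_mul, abs_two]
  have h1 : |(A.1 0 0).re| ≤ ‖A.1 0 0‖ := Complex.abs_re_le_norm _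
  have h2 : ‖A.1 0 0‖ ^ 2 ≤ 1 := by
    rw [← Complex.normSq_eq_norm_sq, ← normSq_add_normSq A]
    linarith [Complex.normSq_nonneg (A.1 1 0)]
  nlinarith [norm_nonneg (A.1 0 0)]

def ofCol (a b : ℂ) (h : Complex.normSq a + Complex.normSq b = 1) : SU2 :=
  ⟨!![a, -conj b; b, conj a], by
    rw [Complex.normSq_add_normSq_eq_one_iff] at h
    refine mem_specialUnitaryGroup_iff.mpr ⟨mem_unitaryGroup_iff'.mpr ?_, ?_⟩
    · ext i j
      fin_cases i <;> fin_cases j <;>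
        simp only [Fin.zero_eta, Fin.mk_one, Fin.isValue, mul_apply, star_apply, of_apply,
          cons_val', cons_val_zero, cons_val_one, cons_val_fin_one, RCLike.star_def,
          Fin.sum_univ_two, map_neg, Complex.conj_conj, one_apply_eq, one_apply_ne, ne_eq,
          zero_ne_one, one_ne_zero, not_false_eq_true] <;>
        first | ring1 | linear_combination h
    · rw [det_fin_two_of]; linear_combination h⟩

lemma inv_ofCol_mul_mul_ofCol_apply {A : SU2} {a b l : ℂ}
    (h : Complex.normSq a + Complex.normSq b = 1) (hA : A.1 *ᵥ ![a, b] = l • ![a, b]) :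
    ((ofCol a b h)⁻¹ * A * ofCol a b h).1 0 0 = l ∧
      ((ofCol a b h)⁻¹ * A * ofCol a b h).1 1 0 = 0 := by
  have hab := (Complex.normSq_add_normSq_eq_one_iff a b).mp h
  have e0 := congrFun hA 0
  have e1 := congrFun hA 1
  simp only [mulVec, dotProduct, Fin.sum_univ_two, cons_val_zero, cons_val_one, cons_val_fin_one,
    Pi.smul_apply, smul_eq_mul] at e0 e1
  simp only [ofCol, Submonoid.coe_mul, coe_inv, mul_apply, star_apply, of_apply, cons_val',
    cons_val_zero, cons_val_one, cons_val_fin_one, RCLike.star_def, Fin.sum_univ_two, map_neg,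
    Complex.conj_conj, neg_mul]
  constructor
  · linear_combination conj a * e0 + conj b * e1 + l * hab
  · linear_combination -b * e0 + a * e1

def diagEntry (t : ℝ) : ℂ := Complex.exp (Real.arccos (t / 2) * Complex.I)

lemma normSq_diagEntry (t : ℝ) : Complex.normSq (diagEntry t) = 1 := by
  rw [Complex.normSq_eq_norm_sq, diagEntry, Complex.norm_exp_ofReal_mul_I, one_pow]

lemma re_diagEntry {t : ℝ} (ht : |t| ≤ 2) : (diagEntry t).re = t / 2 := by
  rw [diagEntry, Complex.exp_ofReal_mul_I_re, Real.cos_arccos] <;> linarith [abs_le.mp ht]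

/-- `diag(λ, λ̄)` with `λ + λ̄ = t` when `|t| ≤ 2`; other values of `t` are never traces. -/
def diag (t : ℝ) : SU2 := ofCol (diagEntry t) 0 (by rw [normSq_diagEntry, map_zero, add_zero])

lemma continuous_diag : Continuous diag := by
  refine Continuous.subtype_mk ?_ _
  unfold diagEntry
  fun_prop

lemma det_sub_diagEntry_smul_eq_zero (A : SU2) :
    ((A : Matrix (Fin 2) (Fin 2) ℂ) - diagEntry (trace (A : Matrix (Fin 2) (Fin 2) ℂ)).re • 1).det
      = 0 := by
  set t := (trace (A : Matrix (Fin 2) (Fin 2) ℂ)).re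
  set l := diagEntry t
  have htrace : A.1 0 0 + conj (A.1 0 0) = t := by
    have ht : t = 2 * (A.1 0 0).re := by simp [t, trace_eq]
    rw [Complex.add_conj, ht]
  have hl : l + conj l = t := by
    rw [Complex.add_conj, re_diagEntry (abs_re_trace_le_two A)]; push_cast; ring
  have hnorm : conj l * l = 1 := by
    rw [← Complex.normSq_eq_conj_mul_self, normSq_diagEntry, Complex.ofReal_one]
  have hA := (Complex.normSq_add_normSq_eq_one_iff _ _).mp (normSq_add_normSq A)
  rw [coe_eq A, det_fin_two]
  simp only [Matrix.sub_apply, Matrix.smul_apply, of_apply, cons_val', cons_val_zero,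
    cons_val_one, cons_val_fin_one, one_apply_eq, one_apply_ne, ne_eq, zero_ne_one, one_ne_zero,
    not_false_eq_true, smul_eq_mul, mul_one, mul_zero, sub_zero]
  linear_combination hA - l * htrace + l * hl - hnorm

lemma exists_inv_mul_mul_eq_diag (A : SU2) :
    ∃ U : SU2, U⁻¹ * A * U = diag (trace (A : Matrix (Fin 2) (Fin 2) ℂ)).re := by
  obtain ⟨a, b, h, hA⟩ :=
    exists_unit_eigenvector_of_det_eq_zero (det_sub_diagEntry_smul_eq_zero A)
  obtain ⟨h0, h1⟩ := inv_ofCol_mul_mul_ofCol_apply h hA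
  exact ⟨ofCol a b h, ext_col h0 h1⟩

lemma isCompact : IsCompact (specialUnitaryGroup (Fin 2) ℂ : Set (Matrix (Fin 2) (Fin 2) ℂ)) := by
  have hclosed : IsClosed (specialUnitaryGroup (Fin 2) ℂ : Set (Matrix (Fin 2) (Fin 2) ℂ)) :=
    isClosed_unitary.inter
      (isClosed_eq (by exact (continuous_id (X := Matrix (Fin 2) (Fin 2) ℂ)).matrix_det)
        continuous_const)
  refine (isCompact_univ_pi fun _ => isCompact_univ_pi fun _ =>
    isCompact_closedBall (0 : ℂ) 1).of_isClosed_subset hclosed fun A hA i _ j _ => ?_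
  rw [Metric.mem_closedBall, dist_zero_right]
  exact entry_norm_bound_of_unitary hA.1 i j

instance : CompactSpace SU2 := isCompact_iff_compactSpace.mp isCompact

instance : IsTopologicalGroup SU2 where
  continuous_inv := continuous_subtype_val.star.subtype_mk _

end SU2

lemma measurePreserving_conj {G : Type*} [Group G] [TopologicalSpace G] [IsTopologicalGroup G]
    [LocallyCompactSpace G] [MeasurableSpace G] [BorelSpace G] (μ : Measure G) [μ.IsHaarMeasure]
    [IsProbabilityMeasure μ] (h : G) : MeasurePreserving (fun x => h * x * h⁻¹) μ μ := by
  have hcont : Continuous (MulAut.conj h) := by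
    show Continuous fun x => h * x * h⁻¹; fun_prop
  have hcont' : Continuous (MulAut.conj h).symm := by
    show Continuous fun x => h⁻¹ * x * h; fun_prop
  have : (μ.map (MulAut.conj h)).IsHaarMeasure := (MulAut.conj h).isHaarMeasure_map μ hcont hcont'
  have : IsProbabilityMeasure (μ.map (MulAut.conj h)) :=
    Measure.isProbabilityMeasure_map hcont.aemeasurable
  exact ⟨hcont.measurable, Measure.isHaarMeasure_eq_of_isProbabilityMeasure (μ.map (MulAut.conj h)) μ⟩

lemma ae_eq_integral_of_forall_ae_eq_const {α β : Type*} [MeasurableSpace α] [MeasurableSpace β]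
    {μ : Measure α} {ν : Measure β} [SFinite μ] [IsProbabilityMeasure ν] {F : α × β → ℝ}
    (hF : Measurable F) (h : ∀ x, ∃ c, ∀ᵐ y ∂ν, F (x, y) = c) :
    ∀ᵐ p ∂μ.prod ν, F p = ∫ y, F (p.1, y) ∂ν := by
  have hmeas : MeasurableSet {p : α × β | F p = ∫ y, F (p.1, y) ∂ν} :=
    measurableSet_eq_fun hF
      (hF.stronglyMeasurable.integral_prod_right'.measurable.comp measurable_fst)
  refine (Measure.ae_prod_iff_ae_ae hmeas).mpr (Filter.Eventually.of_forall fun x => ?_)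
  obtain ⟨c, hc⟩ := h x
  have hint : ∫ y, F (x, y) ∂ν = c := by simp [integral_congr_ae hc]
  filter_upwards [hc] with y hy
  rw [hy, hint]

section Snoc

variable {α : Type*} [MeasurableSpace α] {n : ℕ}

lemma measurable_snoc :
    Measurable fun p : α × (Fin n → α) => (Fin.snoc p.2 p.1 : Fin (n + 1) → α) := by
  convert (MeasurableEquiv.piFinSuccAbove (fun _ => α) (Fin.last n)).symm.measurable with p
  exact (Fin.insertNth_last' _ _).symm

lemma ae_eq_integral_snoc_of_forall_ae_eq_const {μ : Measure α} [IsProbabilityMeasure μ]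
    {f : (Fin (n + 1) → α) → ℝ} (hf : Measurable f)
    (h : ∀ x, ∃ c, ∀ᵐ g ∂Measure.pi (fun _ => μ), f (Fin.snoc g x) = c) :
    ∀ᵐ g ∂Measure.pi (fun _ => μ),
      f g = ∫ g', f (Fin.snoc g' (g (Fin.last n))) ∂Measure.pi fun _ => μ := by
  have hprod := ae_eq_integral_of_forall_ae_eq_const (μ := μ) (hf.comp measurable_snoc) h
  have hsplit := measurePreserving_piFinSuccAbove (fun _ => μ) (Fin.last n)
  filter_upwards [hsplit.quasiMeasurePreserving.ae hprod] with g hg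
  simpa using hg

lemma integral_snoc_conj {G : Type*} [Group G] [MeasurableSpace G] {μ : Measure G}
    [SigmaFinite μ] (hμ : ∀ h : G, MeasurePreserving (fun x => h * x * h⁻¹) μ μ)
    {f : (Fin (n + 1) → G) → ℝ} (hf : Measurable f)
    (hconj : ∀ h g, f (fun i => h * g i * h⁻¹) = f g) (h x : G) :
    ∫ g, f (Fin.snoc g (h * x * h⁻¹)) ∂Measure.pi (fun _ => μ) =
      ∫ g, f (Fin.snoc g x) ∂Measure.pi fun _ => μ := by
  have hpi : MeasurePreserving (fun g : Fin n → G => fun i => h⁻¹ * g i * h⁻¹⁻¹)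
      (Measure.pi fun _ => μ) (Measure.pi fun _ => μ) :=
    measurePreserving_pi _ _ fun _ => hμ h⁻¹
  have hsnoc (g : Fin n → G) :
      f (Fin.snoc g (h * x * h⁻¹)) = f (Fin.snoc (fun i => h⁻¹ * g i * h⁻¹⁻¹) x) := by
    conv_rhs => rw [← hconj h]
    congr 1
    ext i
    refine Fin.lastCases ?_ (fun j => ?_) i <;> simp [mul_assoc]
  have hslice : Measurable fun g : Fin n → G => f (Fin.snoc g x) :=
    hf.comp (measurable_snoc.comp measurable_prodMk_left)
  calc ∫ g, f (Fin.snoc g (h * x * h⁻¹)) ∂Measure.pi (fun _ => μ)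
      = ∫ g, f (Fin.snoc (fun i => h⁻¹ * g i * h⁻¹⁻¹) x) ∂Measure.pi (fun _ => μ) := by
        simp_rw [hsnoc]
    _ = ∫ g, f (Fin.snoc g x) ∂(Measure.pi (fun _ => μ)).map _ :=
        (integral_map hpi.aemeasurable hslice.aestronglyMeasurable).symm
    _ = ∫ g, f (Fin.snoc g x) ∂Measure.pi fun _ => μ := by rw [hpi.map_eq]

end Snoc

theorem invariant_function_factors_through_last_trace_general (m : ℕ)
    (μ : Measure SU2) [μ.IsHaarMeasure] [IsProbabilityMeasure μ]
    (hind : ∀ F : (Fin m → SU2) → ℝ, Measurable F →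
      (∀ (φ : MulAut (FreeGroup (Fin m))) (g : Fin m → SU2), F (FreeGroup.act φ g) = F g) →
      ∃ c : ℝ, ∀ᵐ g ∂(Measure.pi fun _ : Fin m => μ), F g = c)
    (f : (Fin (m+1) → SU2) → ℝ) (hf : Measurable f)
    (hconj : ∀ (h : SU2) (g : Fin (m+1) → SU2), f (fun i => h * g i * h⁻¹) = f g)
    (hinv : ∀ (φ : MulAut (FreeGroup (Fin m))) (g : Fin (m+1) → SU2),
      f (Fin.snoc (FreeGroup.act φ (Fin.init g)) (g (Fin.last m))) = f g) :
    ∃ H : ℝ → ℝ, Measurable H ∧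
      ∀ᵐ g ∂(Measure.pi fun _ : Fin (m+1) => μ),
        f g = H ((Matrix.trace ((g (Fin.last m) : SU2) : Matrix (Fin 2) (Fin 2) ℂ)).re) := by
  set c : SU2 → ℝ := fun x => ∫ g, f (Fin.snoc g x) ∂Measure.pi fun _ => μ
  have hslice (x : SU2) : ∃ k, ∀ᵐ g ∂Measure.pi (fun _ => μ), f (Fin.snoc g x) = k :=
    hind _ (hf.comp (measurable_snoc.comp measurable_prodMk_left)) fun φ g => by
      simpa only [Fin.init_snoc, Fin.snoc_last] using hinv φ (Fin.snoc g x)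
  have hc : Measurable c :=
    (hf.comp measurable_snoc).stronglyMeasurable.integral_prod_right'.measurable
  refine ⟨c ∘ SU2.diag, hc.comp SU2.continuous_diag.measurable, ?_⟩
  filter_upwards [ae_eq_integral_snoc_of_forall_ae_eq_const hf hslice] with g hg
  obtain ⟨U, hU⟩ := SU2.exists_inv_mul_mul_eq_diag (g (Fin.last m))
  rw [hg, Function.comp_apply, ← hU]
  simpa using (integral_snoc_conj (measurePreserving_conj μ) hf hconj U⁻¹ (g (Fin.last m))).symm

/-- Inductive step (the paper's Lemma 3.2 for `j = n`, with `n = m + 1 ≥ 4`): if every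
measurable `Aut(F_m)`-invariant function on `SU(2)^m` is a.e. constant, then every
measurable function on `SU(2)^(m+1)` invariant under simultaneous conjugation and under
the stabilized copy of `Aut(F_m)` factors a.e. through the trace of the last
coordinate. -/
theorem invariant_function_factors_through_last_trace (m : ℕ) (hm : 3 ≤ m)
    (μ : Measure SU2) [μ.IsHaarMeasure] [IsProbabilityMeasure μ]
    (hind : ∀ F : (Fin m → SU2) → ℝ, Measurable F →
      (∀ (φ : MulAut (FreeGroup (Fin m))) (g : Fin m → SU2), F (FreeGroup.act φ g) = F g) →
      ∃ c : ℝ, ∀ᵐ g ∂(Measure.pi fun _ : Fin m => μ), F g = c)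
    (f : (Fin (m+1) → SU2) → ℝ) (hf : Measurable f)
    (hconj : ∀ (h : SU2) (g : Fin (m+1) → SU2), f (fun i => h * g i * h⁻¹) = f g)
    (hinv : ∀ (φ : MulAut (FreeGroup (Fin m))) (g : Fin (m+1) → SU2),
      f (Fin.snoc (FreeGroup.act φ (Fin.init g)) (g (Fin.last m))) = f g) :
    ∃ H : ℝ → ℝ, Measurable H ∧
      ∀ᵐ g ∂(Measure.pi fun _ : Fin (m+1) => μ),
        f g = H ((Matrix.trace ((g (Fin.last m) : SU2) : Matrix (Fin 2) (Fin 2) ℂ)).re) :=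
  invariant_function_factors_through_last_trace_general m μ hind f hf hconj hinv
end
end
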